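/- Let 𝒢 be the set of paths in ℰ of the form (i) (UD)^k for some k ≥ 0, or (ii) (UD)^ℓ U^k C_k (UD)^m with ℓ, m ≥ 0 and k ≥ 2, or (iii) (UD)^{ℓ_0}U^{k_1}(UD)^{ℓ_1}U^{k_2}(UD)^{ℓ_2}⋯U^{k_r}(UD)^{ℓ_r}U^{k_{r+1}}C_s(UD)^{ℓ_{r+1}} with r ≥ 1, ℓ_0, ℓ_{r+1} ≥ 0, k_i ≥ 1 for 1 ≤ i ≤ r, k_{r+1} ≥ 0, ℓ_i ≥ 1 for 1 ≤ i ≤ r, and s ≥ 1 such that the path ends on the x-axis (with the convention C_1 = D). Then for every path P ∈ ℰ there exists exactly one path Q ∈ 𝒢 with |Q| = |P| such that P and Q are UD-equivalent. In other words, 𝒢 is a complete set of representatives of the UD-equivalence classes of ℰ. -/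

import Mathlib

/-- Steps of a Dyck path with catastrophes: up-step `U`, down-step `D`,
and catastrophe step `C k` of size `k` (valid paths only use `k ≥ 2`). -/
inductive Step where
  | U : Step
  | D : Step
  | C : ℕ → Step
  deriving DecidableEq

/-- The vertical displacement of a step. -/
def Step.val : Step → ℤ
  | .U => 1
  | .D => -1
  | .C k => -(k : ℤ)

/-- The height (ordinate) of the path after its first `i` steps. -/
def hgt (P : List Step) (i : ℕ) : ℤ := ((P.take i).map Step.val).sum

/-- `InE P` means `P` is a Dyck path with catastrophes (a member of ℰ):
it stays at height ≥ 0, ends on the x-axis, and every catastrophe step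
`C k` has `k ≥ 2` and starts at height `k` (hence ends on the x-axis). -/
def InE (P : List Step) : Prop :=
  (∀ i, 0 ≤ hgt P i) ∧ hgt P P.length = 0 ∧
    ∀ i k, P[i]? = some (Step.C k) → 2 ≤ k ∧ hgt P i = (k : ℤ)

/-- `(UD)^k`. -/
def UDpow (k : ℕ) : List Step := (List.replicate k [Step.U, Step.D]).flatten

/-- `(DU)^k`. -/
def DUpow (k : ℕ) : List Step := (List.replicate k [Step.D, Step.U]).flatten

/-- `U^k`. -/
def Upow (k : ℕ) : List Step := List.replicate k Step.U

/-- `C_s` with the convention `C_1 = D`. -/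
def cfin (s : ℕ) : Step := if s = 1 then Step.D else Step.C s

/-- Test whether a step is a catastrophe step. -/
def isCatB : Step → Bool
  | .C _ => true
  | _ => false

/-- The number of catastrophe steps in a path. -/
def catCount (P : List Step) : ℕ := P.countP isCatB

/-- Two paths are `UD`-equivalent when the occurrences of the pattern `UD`
appear at the same positions in both paths. -/
def UDEquiv (P Q : List Step) : Prop :=
  ∀ i : ℕ, (P[i]? = some Step.U ∧ P[i + 1]? = some Step.D) ↔
    (Q[i]? = some Step.U ∧ Q[i + 1]? = some Step.D)

/-- Membership in 𝒢 : either (i) `(UD)^k`, or (ii) `(UD)^ℓ U^k C_k (UD)^m`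
with `k ≥ 2`, or (iii)
`(UD)^{ℓ_0} U^{k_1} (UD)^{ℓ_1} ⋯ U^{k_r} (UD)^{ℓ_r} U^{k_{r+1}} C_s (UD)^{ℓ_{r+1}}`
with `r ≥ 1`, `k_i ≥ 1` and `ℓ_i ≥ 1` for `1 ≤ i ≤ r`, `k_{r+1} ≥ 0`,
`ℓ_0, ℓ_{r+1} ≥ 0` and `s ≥ 1` (with the convention `C_1 = D`).
The blocks `U^{k_i} (UD)^{ℓ_i}` of (iii) are encoded by a list of pairs. -/
def InG (P : List Step) : Prop :=
  (∃ k, P = UDpow k) ∨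
  (∃ l k m, 2 ≤ k ∧ P = UDpow l ++ Upow k ++ [Step.C k] ++ UDpow m) ∨
  ∃ (l0 : ℕ) (mids : List (ℕ × ℕ)) (kr1 s lr1 : ℕ),
    mids ≠ [] ∧ (∀ t ∈ mids, 1 ≤ t.1 ∧ 1 ≤ t.2) ∧ 1 ≤ s ∧
    P = UDpow l0 ++ (mids.map (fun t => Upow t.1 ++ UDpow t.2)).flatten ++
      Upow kr1 ++ [cfin s] ++ UDpow lr1


/-!
A position of a path is *covered* if it lies in an occurrence of `UD`. Occurrences cannot
overlap, so the covered steps come in `UD` pairs of total height change zero, and the height of a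
path is the sum of its steps at uncovered positions. The covered positions, hence also the number
`t` of uncovered ones, depend only on the UD-class.

The representative of `P ∈ ℰ` keeps the `UD` pairs of `P` and puts `U` at every uncovered
position except the last, which gets `C_{t-1}`. No new `UD` appears, because `t ≠ 1` and, when
`t = 2`, the two uncovered steps of `P` are not adjacent (the first has to go up and the second
down, so they would form a `UD`). Conversely, in a path of `𝒢` every uncovered step but the last
is `U`; if the path is in `ℰ`, ending on the x-axis forces the last one to be `C_{t-1}`, so the
path is its own representative.
-/

open Finset

def UDAt (P : List Step) (i : ℕ) : Prop :=
  P[i]? = some Step.U ∧ P[i + 1]? = some Step.D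

instance (P : List Step) (i : ℕ) : Decidable (UDAt P i) :=
  inferInstanceAs (Decidable (_ ∧ _))

def EndsUD (P : List Step) : ℕ → Prop
  | 0 => False
  | i + 1 => UDAt P i

instance (P : List Step) : (i : ℕ) → Decidable (EndsUD P i)
  | 0 => inferInstanceAs (Decidable False)
  | i + 1 => inferInstanceAs (Decidable (UDAt P i))

def Covered (P : List Step) (i : ℕ) : Prop := UDAt P i ∨ EndsUD P i

instance (P : List Step) (i : ℕ) : Decidable (Covered P i) :=
  inferInstanceAs (Decidable (_ ∨ _))

def uncovered (P : List Step) : Finset ℕ := (range P.length).filter fun i => ¬ Covered P i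

def stepVal (P : List Step) (i : ℕ) : ℤ := ((P[i]?).map Step.val).getD 0

section Occurrences

variable {P Q A B : List Step} {i k : ℕ}

@[simp] theorem endsUD_zero : ¬ EndsUD P 0 := id

@[simp] theorem endsUD_succ : EndsUD P (i + 1) ↔ UDAt P i := Iff.rfl

theorem mem_uncovered : i ∈ uncovered P ↔ i < P.length ∧ ¬ Covered P i := by
  simp [uncovered]

theorem UDAt.succ_lt_length (h : UDAt P i) : i + 1 < P.length :=
  (List.getElem?_eq_some_iff.mp h.2).1

theorem UDAt.not_succ (h : UDAt P i) : ¬ UDAt P (i + 1) := fun h' => by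
  simpa [h.2] using h'.1

theorem UDAt.not_endsUD (h : UDAt P i) : ¬ EndsUD P i := by
  cases i with
  | zero => exact id
  | succ i => exact fun h' => h'.not_succ h

theorem EndsUD.getElem? (h : EndsUD P i) : P[i]? = some Step.D := by
  cases i with
  | zero => exact h.elim
  | succ i => exact h.2

theorem not_endsUD_length : ¬ EndsUD P P.length := by
  cases h : P.length with
  | zero => exact id
  | succ n => exact fun h' => by have := h'.succ_lt_length; omega

theorem covered_congr (h : ∀ i, UDAt P i ↔ UDAt Q i) : Covered P i ↔ Covered Q i := by
  cases i <;> simp [Covered, h]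

theorem UDAt_drop : UDAt (P.drop k) i ↔ UDAt P (k + i) := by
  simp [UDAt, add_assoc]

theorem covered_drop (hk : ¬ EndsUD P k) : Covered (P.drop k) i ↔ Covered P (k + i) := by
  cases i with
  | zero => simp [Covered, UDAt_drop, hk]
  | succ i => simp [Covered, UDAt_drop, ← add_assoc]

theorem mem_uncovered_drop (hk : ¬ EndsUD P k) :
    i ∈ uncovered (P.drop k) ↔ k + i ∈ uncovered P := by
  simp only [mem_uncovered, covered_drop hk, List.length_drop]
  exact and_congr_left' (by omega)

theorem UDAt_take : UDAt (P.take k) i ↔ UDAt P i ∧ i + 1 < k := by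
  simp only [UDAt, List.getElem?_take]
  constructor
  · rintro ⟨h1, h2⟩
    split_ifs at h1 h2 with h h'
    exact ⟨⟨h1, h2⟩, h'⟩
  · rintro ⟨⟨h1, h2⟩, hk⟩
    simp [h1, h2, hk, show i < k by omega]

theorem covered_take (hk : ¬ EndsUD P k) (hi : i < k) :
    Covered (P.take k) i ↔ Covered P i := by
  have hlt : ∀ j, j < k → UDAt P j → j + 1 < k := fun j hj h => by
    by_contra hge
    exact hk (by rw [show k = j + 1 by omega]; exact h)
  cases i with
  | zero =>
    simp only [Covered, UDAt_take, endsUD_zero, or_false]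
    exact ⟨And.left, fun h => ⟨h, hlt 0 hi h⟩⟩
  | succ i =>
    simp only [Covered, UDAt_take, endsUD_succ]
    exact ⟨fun h => h.imp And.left And.left,
      fun h => h.imp (fun h => ⟨h, hlt _ hi h⟩) (fun h => ⟨h, hi⟩)⟩

theorem UDAt.append_right (h : UDAt A i) : UDAt (A ++ B) i := by
  have := h.succ_lt_length
  exact ⟨by rw [List.getElem?_append_left (by omega), h.1],
    by rw [List.getElem?_append_left this, h.2]⟩

theorem UDAt.append_left (h : UDAt B i) : UDAt (A ++ B) (A.length + i) := by
  rw [UDAt, add_assoc, List.getElem?_append_right (by omega), List.getElem?_append_right (by omega)]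
  simpa [UDAt] using h

theorem Covered.append_right (h : Covered A i) : Covered (A ++ B) i := by
  cases i with
  | zero => exact .inl (h.resolve_right id).append_right
  | succ i => exact h.imp UDAt.append_right UDAt.append_right

theorem Covered.append_left (h : Covered B i) : Covered (A ++ B) (A.length + i) := by
  cases i with
  | zero => exact .inl (h.resolve_right id).append_left
  | succ i => exact h.imp UDAt.append_left UDAt.append_left

end Occurrences

section Heights

variable {P : List Step} {i s : ℕ}

theorem hgt_succ (P : List Step) (i : ℕ) : hgt P (i + 1) = hgt P i + stepVal P i := by
  unfold hgt stepVal
  rw [List.take_add_one, List.map_append, List.sum_append]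
  cases P[i]? <;> simp

theorem hgt_of_length_le (h : P.length ≤ i) : hgt P i = hgt P P.length := by
  simp [hgt, List.take_of_length_le h]

theorem stepVal_of_getElem? {x : Step} (h : P[i]? = some x) : stepVal P i = x.val := by
  simp [stepVal, h]

theorem hgt_eq_sum_uncovered_lt : ∀ i, ¬ EndsUD P i →
    hgt P i = ∑ k ∈ (range i).filter (fun k => ¬ Covered P k), stepVal P k
  | 0, _ => by simp [hgt]
  | j + 1, hj => by
    by_cases hcov : Covered P j
    · obtain ⟨m, rfl⟩ : ∃ m, j = m + 1 := Nat.exists_eq_succ_of_ne_zero fun h => by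
        subst h; exact hj (hcov.resolve_right id)
      have hm : UDAt P m := hcov.resolve_left hj
      have hfilter : (range (m + 2)).filter (fun k => ¬ Covered P k)
          = (range m).filter (fun k => ¬ Covered P k) := by
        rw [range_add_one, range_add_one, filter_insert, filter_insert, if_neg (not_not.2 hcov),
          if_neg (not_not.2 (.inl hm))]
      rw [hgt_succ, hgt_succ, hgt_eq_sum_uncovered_lt m hm.not_endsUD, hfilter,
        stepVal_of_getElem? hm.1, stepVal_of_getElem? hm.2]
      simp [Step.val]
    · rw [hgt_succ, hgt_eq_sum_uncovered_lt j (fun h => hcov (.inr h)), range_add_one,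
        filter_insert, if_pos hcov, sum_insert (by simp), add_comm]

theorem hgt_length_eq_sum_uncovered (P : List Step) :
    hgt P P.length = ∑ k ∈ uncovered P, stepVal P k :=
  hgt_eq_sum_uncovered_lt _ not_endsUD_length

theorem getElem?_eq_U_of_stepVal_pos (hi : i < P.length) (h : 0 < stepVal P i) :
    P[i]? = some Step.U := by
  rw [stepVal_of_getElem? (List.getElem?_eq_getElem hi)] at h
  rw [List.getElem?_eq_getElem hi]
  cases hc : P[i] <;> simp_all [Step.val]
  omega

theorem stepVal_ne_zero (hP : InE P) (hi : i < P.length) : stepVal P i ≠ 0 := by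
  have hx := List.getElem?_eq_getElem hi
  rw [stepVal_of_getElem? hx]
  cases h : P[i] with
  | U => decide
  | D => decide
  | C c =>
    have := (hP.2.2 i c (h ▸ hx)).1
    simp [Step.val]
    omega

theorem getElem?_eq_cfin_of_stepVal (hP : InE P) (hi : i < P.length) (hs : 1 ≤ s)
    (h : stepVal P i = -s) : P[i]? = some (cfin s) := by
  have hx := List.getElem?_eq_getElem hi
  rw [stepVal_of_getElem? hx] at h
  rw [hx]
  cases hc : P[i] with
  | U => simp [hc, Step.val] at h; omega
  | D => simp [hc, Step.val] at h; simp [cfin]; omega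
  | C c =>
    have := (hP.2.2 i c (hc ▸ hx)).1
    simp [hc, Step.val] at h
    simp [cfin, h]
    omega

end Heights

section Words

theorem UDpow_succ (m : ℕ) : UDpow (m + 1) = [Step.U, Step.D] ++ UDpow m := by
  simp [UDpow, List.replicate_succ]

theorem length_UDpow (m : ℕ) : (UDpow m).length = 2 * m := by
  induction m with
  | zero => rfl
  | succ m ih => rw [UDpow_succ, List.length_append, ih]; simp; ring

theorem length_Upow (k : ℕ) : (Upow k).length = k := List.length_replicate

def blocks (mids : List (ℕ × ℕ)) : List Step := (mids.map fun t => Upow t.1 ++ UDpow t.2).flatten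

@[simp] theorem blocks_nil : blocks [] = [] := rfl

theorem blocks_cons (t : ℕ × ℕ) (mids : List (ℕ × ℕ)) :
    blocks (t :: mids) = Upow t.1 ++ UDpow t.2 ++ blocks mids := rfl

theorem sum_val_UDpow (m : ℕ) : ((UDpow m).map Step.val).sum = 0 := by
  induction m with
  | zero => rfl
  | succ m ih => simp [UDpow_succ, ih, Step.val]

theorem sum_val_Upow (k : ℕ) : ((Upow k).map Step.val).sum = k := by
  simp [Upow, Step.val]

theorem sum_val_blocks (mids : List (ℕ × ℕ)) :
    ((blocks mids).map Step.val).sum = (mids.map fun t => (t.1 : ℤ)).sum := by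
  induction mids with
  | nil => rfl
  | cons t mids ih => simp [blocks_cons, sum_val_Upow, sum_val_UDpow, ih]

theorem val_cfin (s : ℕ) : (cfin s).val = -(s : ℤ) := by
  unfold cfin
  split_ifs with h <;> simp [h, Step.val]

theorem cfin_ne_U (s : ℕ) : cfin s ≠ Step.U := by
  unfold cfin
  split_ifs <;> simp

theorem cfin_eq_D_iff {s : ℕ} : cfin s = Step.D ↔ s = 1 := by
  unfold cfin
  split_ifs with h <;> simp [h]

theorem cfin_eq_C_iff {s c : ℕ} : cfin s = Step.C c ↔ s ≠ 1 ∧ s = c := by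
  unfold cfin
  split_ifs with h <;> simp [h]

theorem covered_UDpow {m i : ℕ} (hi : i < 2 * m) : Covered (UDpow m) i := by
  induction m generalizing i with
  | zero => omega
  | succ m ih =>
    rw [UDpow_succ]
    match i with
    | 0 => exact .inl (by simp [UDAt])
    | 1 => exact .inr (by simp [UDAt])
    | j + 2 => simpa [add_comm] using (ih (i := j) (by omega)).append_left (A := [Step.U, Step.D])

theorem uncovered_UDpow (m : ℕ) : uncovered (UDpow m) = ∅ := by
  ext i
  simpa [mem_uncovered, length_UDpow] using fun hi => covered_UDpow hi

theorem eq_UDpow_of_uncovered_eq_empty : ∀ R : List Step, uncovered R = ∅ → ∃ m, R = UDpow m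
  | [], _ => ⟨0, rfl⟩
  | [x], h => absurd h (ne_empty_of_mem (a := 0) (by simp [mem_uncovered, Covered, UDAt]))
  | x :: y :: R, h => by
    have h0 : UDAt (x :: y :: R) 0 := by
      by_contra hc
      exact eq_empty_iff_forall_notMem.1 h 0
        (mem_uncovered.2 ⟨by simp, fun hc' => hc (hc'.resolve_right id)⟩)
    obtain ⟨rfl, rfl⟩ : x = Step.U ∧ y = Step.D := by simpa [UDAt] using h0
    have hR : uncovered R = ∅ := by
      have h2 : ¬ EndsUD (Step.U :: Step.D :: R) 2 := by simp [UDAt]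
      ext i
      simpa [h] using (mem_uncovered_drop h2 (i := i)).symm
    obtain ⟨m, rfl⟩ := eq_UDpow_of_uncovered_eq_empty R hR
    exact ⟨m + 1, by rw [UDpow_succ]; rfl⟩

end Words

section BlockWords

def UncoveredAreU (W : List Step) : Prop := ∀ i ∈ uncovered W, W[i]? = some Step.U

def IsBlockWord (W : List Step) : Prop :=
  ∃ l0 mids kr1, (∀ t ∈ mids, 1 ≤ t.1 ∧ 1 ≤ t.2) ∧ W = UDpow l0 ++ blocks mids ++ Upow kr1

variable {A B W : List Step} {k : ℕ}

theorem UncoveredAreU.append (hA : UncoveredAreU A) (hB : UncoveredAreU B) :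
    UncoveredAreU (A ++ B) := by
  intro i hi
  obtain ⟨hlen, hcov⟩ := mem_uncovered.1 hi
  rcases lt_or_ge i A.length with h | h
  · rw [List.getElem?_append_left h]
    exact hA i (mem_uncovered.2 ⟨h, fun hc => hcov hc.append_right⟩)
  · obtain ⟨j, rfl⟩ := Nat.exists_eq_add_of_le h
    rw [List.getElem?_append_right h, Nat.add_sub_cancel_left]
    rw [List.length_append] at hlen
    exact hB j (mem_uncovered.2 ⟨by omega, fun hc => hcov hc.append_left⟩)

theorem UncoveredAreU.drop (hW : UncoveredAreU W) (hk : ¬ EndsUD W k) :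
    UncoveredAreU (W.drop k) := fun i hi => by
  rw [List.getElem?_drop]
  exact hW _ ((mem_uncovered_drop hk).1 hi)

theorem uncoveredAreU_UDpow (m : ℕ) : UncoveredAreU (UDpow m) := by
  simp [UncoveredAreU, uncovered_UDpow]

theorem uncoveredAreU_Upow (k : ℕ) : UncoveredAreU (Upow k) := fun i hi => by
  have := (mem_uncovered.1 hi).1
  rw [length_Upow] at this
  simp [Upow, this]

theorem uncoveredAreU_blocks (mids : List (ℕ × ℕ)) : UncoveredAreU (blocks mids) := by
  induction mids with
  | nil => simp [UncoveredAreU, mem_uncovered]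
  | cons t mids ih =>
    exact ((uncoveredAreU_Upow _).append (uncoveredAreU_UDpow _)).append ih

theorem IsBlockWord.cons_U : IsBlockWord W → IsBlockWord (Step.U :: W)
  | ⟨0, [], kr1, _, hW⟩ => ⟨0, [], kr1 + 1, by simp, by simp [hW, Upow, UDpow, List.replicate_succ]⟩
  | ⟨0, t :: mids, kr1, hm, hW⟩ =>
    ⟨0, (t.1 + 1, t.2) :: mids, kr1, by
      simp only [List.mem_cons, forall_eq_or_imp] at hm ⊢
      exact ⟨⟨by omega, hm.1.2⟩, hm.2⟩, by
      simp [hW, blocks_cons, Upow, UDpow, List.replicate_succ]⟩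
  | ⟨l0 + 1, mids, kr1, hm, hW⟩ =>
    ⟨0, (1, l0 + 1) :: mids, kr1, by
      simp only [List.mem_cons, forall_eq_or_imp]
      exact ⟨⟨le_rfl, by omega⟩, hm⟩, by
      simp [hW, blocks_cons, Upow, UDpow]⟩

theorem isBlockWord_of_uncoveredAreU (W : List Step) (hW : UncoveredAreU W) : IsBlockWord W := by
  induction h : W.length using Nat.strong_induction_on generalizing W with
  | _ n ih =>
  match W with
  | [] => exact ⟨0, [], 0, by simp, rfl⟩
  | x :: W =>
    by_cases h0 : UDAt (x :: W) 0
    · obtain ⟨rfl, W, rfl⟩ : x = Step.U ∧ ∃ W', W = Step.D :: W' := by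
        obtain ⟨h1, h2⟩ := h0
        cases W with
        | nil => simp at h2
        | cons y W =>
          simp only [List.getElem?_cons_zero, List.getElem?_cons_succ, Option.some.injEq] at h1 h2
          exact ⟨h1, W, by rw [h2]⟩
      have h2 : ¬ EndsUD (Step.U :: Step.D :: W) 2 := by simp [UDAt]
      obtain ⟨l0, mids, kr1, hm, rfl⟩ :=
        ih W.length (by simp at h; omega) W (hW.drop h2) rfl
      exact ⟨l0 + 1, mids, kr1, hm, by simp [UDpow_succ]⟩
    · have hx : x = Step.U := by
        simpa using hW 0 (mem_uncovered.2 ⟨by simp, fun hc => h0 (hc.resolve_right id)⟩)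
      subst hx
      exact (ih W.length (by simp at h; omega) W (hW.drop (k := 1) h0) rfl).cons_U

end BlockWords

section PathsInE

variable {P : List Step}

theorem card_uncovered_ne_one (hP : InE P) : #(uncovered P) ≠ 1 := by
  intro h
  obtain ⟨k, hk⟩ := card_eq_one.1 h
  have hsum := hgt_length_eq_sum_uncovered P
  rw [hP.2.1, hk, sum_singleton] at hsum
  exact stepVal_ne_zero hP (mem_uncovered.1 (hk ▸ mem_singleton_self k)).1 hsum.symm

theorem uncovered_ne_pair (hP : InE P) (i : ℕ) : uncovered P ≠ {i, i + 1} := by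
  intro h
  obtain ⟨hi, hicov⟩ := mem_uncovered.1 (show i ∈ uncovered P by simp [h])
  have hi1 := (mem_uncovered.1 (show i + 1 ∈ uncovered P by simp [h])).1
  have hgt_i : hgt P i = 0 := by
    rw [hgt_eq_sum_uncovered_lt i (fun h' => hicov (.inr h')), sum_eq_zero]
    intro k hk
    simp only [mem_filter, mem_range] at hk
    have : k ∈ uncovered P := mem_uncovered.2 ⟨by omega, hk.2⟩
    simp [h] at this
    omega
  have hpos : 0 < stepVal P i := by
    have := hP.1 (i + 1)
    rw [hgt_succ, hgt_i, zero_add] at this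
    exact lt_of_le_of_ne this (stepVal_ne_zero hP hi).symm
  have hU := getElem?_eq_U_of_stepVal_pos hi hpos
  have hsum := hgt_length_eq_sum_uncovered P
  rw [hP.2.1, h, sum_pair (by omega), stepVal_of_getElem? hU] at hsum
  have hD := getElem?_eq_cfin_of_stepVal hP hi1 le_rfl <| by
    simp only [Step.val] at hsum
    push_cast
    linarith
  exact hicov (.inl ⟨hU, by simpa [cfin] using hD⟩)

end PathsInE

section Canonical

def canonStep (P : List Step) (i : ℕ) : Step :=
  if UDAt P i then Step.U
  else if EndsUD P i then Step.D
  else if ∀ k ∈ uncovered P, k ≤ i then cfin (#(uncovered P) - 1)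
  else Step.U

def canonical (P : List Step) : List Step := (List.range P.length).map (canonStep P)

variable {P Q : List Step} {i k : ℕ}

@[simp] theorem length_canonical : (canonical P).length = P.length := by simp [canonical]

theorem getElem?_canonical (hi : i < P.length) : (canonical P)[i]? = some (canonStep P i) := by
  simp [canonical, hi]

theorem canonStep_of_UDAt (h : UDAt P i) : canonStep P i = Step.U := if_pos h

theorem canonStep_of_endsUD (h : EndsUD P i) : canonStep P i = Step.D := by
  rw [canonStep, if_neg fun h' => by simpa [h.getElem?] using h'.1, if_pos h]

theorem canonStep_of_not_covered (h : ¬ Covered P i) : canonStep P i =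
    if ∀ k ∈ uncovered P, k ≤ i then cfin (#(uncovered P) - 1) else Step.U := by
  rw [canonStep, if_neg fun h' => h (.inl h'), if_neg fun h' => h (.inr h')]

theorem canonical_congr (hlen : P.length = Q.length) (h : ∀ i, UDAt P i ↔ UDAt Q i) :
    canonical P = canonical Q := by
  have hends : ∀ i, EndsUD P i ↔ EndsUD Q i := fun i => by cases i <;> simp [h]
  have huncov : uncovered P = uncovered Q := by
    ext i
    simp [mem_uncovered, hlen, covered_congr h]
  have hstep : canonStep P = canonStep Q := funext fun i => by
    simp only [canonStep, h, hends, huncov]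
  rw [canonical, canonical, hlen, hstep]

end Canonical

section CanonicalOfE

variable {P : List Step} {i k : ℕ}

theorem UDAt_canonical_iff (hP : InE P) : UDAt (canonical P) i ↔ UDAt P i := by
  refine ⟨fun ⟨h1, h2⟩ => ?_, fun h => ?_⟩
  · have hi1 : i + 1 < P.length := by simpa using (List.getElem?_eq_some_iff.1 h2).1
    rw [getElem?_canonical (by omega), Option.some.injEq] at h1
    rw [getElem?_canonical hi1, Option.some.injEq] at h2
    by_contra hno
    have hicov : ¬ Covered P i := fun hc =>
      hc.elim hno fun he => by rw [canonStep_of_endsUD he] at h1; cases h1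
    have hi1cov : ¬ Covered P (i + 1) := fun hc =>
      hc.elim (fun hu => by rw [canonStep_of_UDAt hu] at h2; cases h2) hno
    rw [canonStep_of_not_covered hicov] at h1
    rw [canonStep_of_not_covered hi1cov] at h2
    split_ifs at h1 h2 with hlast
    · exact cfin_ne_U _ h1
    · have hsub : {i, i + 1} ⊆ uncovered P := by
        simp [insert_subset_iff, mem_uncovered, hicov, hi1cov, hi1, show i < P.length by omega]
      have hcard : #(uncovered P) = 2 := by
        have := card_pos.2 ⟨i, hsub (mem_insert_self _ _)⟩
        have := cfin_eq_D_iff.1 h2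
        omega
      exact uncovered_ne_pair hP i (eq_of_subset_of_card_le hsub (by simp [hcard])).symm
  · have hlt := h.succ_lt_length
    exact ⟨by rw [getElem?_canonical (by omega), canonStep_of_UDAt h],
      by rw [getElem?_canonical hlt, canonStep_of_endsUD (i := i + 1) h]⟩

theorem covered_canonical_iff (hP : InE P) : Covered (canonical P) i ↔ Covered P i := by
  cases i <;> simp [Covered, UDAt_canonical_iff hP]

theorem endsUD_canonical_iff (hP : InE P) : EndsUD (canonical P) i ↔ EndsUD P i := by
  cases i <;> simp [UDAt_canonical_iff hP]

theorem uncovered_canonical (hP : InE P) : uncovered (canonical P) = uncovered P := by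
  ext
  simp [mem_uncovered, covered_canonical_iff hP]

theorem stepVal_canonical_of_lt (hk : k ∈ uncovered P) (hi : i ∈ uncovered P) (hki : k < i) :
    stepVal (canonical P) k = 1 := by
  obtain ⟨hklen, hkcov⟩ := mem_uncovered.1 hk
  rw [stepVal_of_getElem? (getElem?_canonical hklen), canonStep_of_not_covered hkcov,
    if_neg fun h => by have := h i hi; omega]
  rfl

theorem stepVal_canonical_of_max (hk : k ∈ uncovered P) (hmax : ∀ i ∈ uncovered P, i ≤ k) :
    stepVal (canonical P) k = -((#(uncovered P) - 1 : ℕ) : ℤ) := by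
  obtain ⟨hklen, hkcov⟩ := mem_uncovered.1 hk
  rw [stepVal_of_getElem? (getElem?_canonical hklen), canonStep_of_not_covered hkcov,
    if_pos hmax, val_cfin]

theorem hgt_canonical (hP : InE P) (hi : i ≤ P.length) (hend : ¬ EndsUD P i) :
    hgt (canonical P) i =
      if ∀ k ∈ uncovered P, k < i then (0 : ℤ) else #((uncovered P).filter (· < i)) := by
  have hfilter : (range i).filter (fun k => ¬ Covered (canonical P) k)
      = (uncovered P).filter (· < i) := by
    ext k
    simp only [mem_filter, mem_range, mem_uncovered, covered_canonical_iff hP]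
    constructor
    · rintro ⟨hk, hc⟩
      exact ⟨⟨by omega, hc⟩, hk⟩
    · rintro ⟨⟨-, hc⟩, hk⟩
      exact ⟨hk, hc⟩
  rw [hgt_eq_sum_uncovered_lt i (by rwa [endsUD_canonical_iff hP]), hfilter]
  split_ifs with hall
  · rw [filter_true_of_mem hall]
    rcases (uncovered P).eq_empty_or_nonempty with he | hne
    · simp [he]
    obtain ⟨j, hj, hjmax⟩ := (uncovered P).exists_max_image id hne
    rw [← add_sum_erase _ _ hj, stepVal_canonical_of_max hj hjmax,
      sum_congr rfl fun k hk => stepVal_canonical_of_lt (mem_of_mem_erase hk) hj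
        (lt_of_le_of_ne (hjmax k (mem_of_mem_erase hk)) (ne_of_mem_erase hk))]
    simp [card_erase_of_mem hj]
  · obtain ⟨j, hj, hij⟩ := not_forall₂.1 hall
    rw [card_eq_sum_ones, Nat.cast_sum, Nat.cast_one]
    exact sum_congr rfl fun k hk =>
      stepVal_canonical_of_lt (mem_filter.1 hk).1 hj (by have := (mem_filter.1 hk).2; omega)

theorem hgt_canonical_of_max (hP : InE P) (hk : k ∈ uncovered P)
    (hmax : ∀ i ∈ uncovered P, i ≤ k) : hgt (canonical P) k = (#(uncovered P) - 1 : ℕ) := by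
  obtain ⟨hklen, hkcov⟩ := mem_uncovered.1 hk
  have hbefore : (uncovered P).filter (· < k) = (uncovered P).erase k := by
    ext i
    simp only [mem_filter, mem_erase]
    exact ⟨fun ⟨hi, hik⟩ => ⟨by omega, hi⟩, fun ⟨hik, hi⟩ => ⟨hi, by have := hmax i hi; omega⟩⟩
  rw [hgt_canonical hP hklen.le fun h => hkcov (.inr h), if_neg fun h => (h k hk).false, hbefore,
    card_erase_of_mem hk]

theorem InE_canonical (hP : InE P) : InE (canonical P) := by
  have hgt_nonneg : ∀ i ≤ P.length, ¬ EndsUD P i → 0 ≤ hgt (canonical P) i := fun i hi h => by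
    rw [hgt_canonical hP hi h]
    split_ifs <;> positivity
  have hgt_length : hgt (canonical P) P.length = 0 := by
    rw [hgt_canonical hP le_rfl not_endsUD_length, if_pos fun k hk => (mem_uncovered.1 hk).1]
  refine ⟨fun i => ?_, by rw [length_canonical, hgt_length], fun i c hc => ?_⟩
  · rcases le_or_gt i P.length with hi | hi
    · by_cases h : EndsUD P i
      · obtain ⟨m, rfl⟩ : ∃ m, i = m + 1 := Nat.exists_eq_succ_of_ne_zero fun h0 => by
          subst h0; exact h
        rw [hgt_succ, stepVal_of_getElem? (getElem?_canonical (by omega)),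
          canonStep_of_UDAt (h : UDAt P m)]
        have := hgt_nonneg m (by omega) (UDAt.not_endsUD h)
        simp only [Step.val]
        omega
      · exact hgt_nonneg i hi h
    · rw [hgt_of_length_le (by simp; omega), length_canonical, hgt_length]
  · have hi : i < P.length := by simpa using (List.getElem?_eq_some_iff.1 hc).1
    rw [getElem?_canonical hi, Option.some.injEq] at hc
    have hcov : ¬ Covered P i := by
      rintro (h | h)
      · rw [canonStep_of_UDAt h] at hc; cases hc
      · rw [canonStep_of_endsUD h] at hc; cases hc
    have hmem : i ∈ uncovered P := mem_uncovered.2 ⟨hi, hcov⟩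
    rw [canonStep_of_not_covered hcov] at hc
    split_ifs at hc with hlast
    obtain ⟨hne1, rfl⟩ := cfin_eq_C_iff.1 hc
    have := card_uncovered_ne_one hP
    have := card_pos.2 ⟨i, hmem⟩
    exact ⟨by omega, hgt_canonical_of_max hP hmem hlast⟩

end CanonicalOfE

section Representatives

variable {P Q W : List Step} {i k : ℕ}

theorem canonical_eq_take_append_drop (hk : k ∈ uncovered P)
    (hmax : ∀ i ∈ uncovered P, i ≤ k) : canonical P =
      (canonical P).take k ++ [cfin (#(uncovered P) - 1)] ++ (canonical P).drop (k + 1) := by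
  obtain ⟨hklen, hkcov⟩ := mem_uncovered.1 hk
  have hget : (canonical P)[k]? = some (cfin (#(uncovered P) - 1)) := by
    rw [getElem?_canonical hklen, canonStep_of_not_covered hkcov, if_pos hmax]
  obtain ⟨hk', hget'⟩ := List.getElem?_eq_some_iff.1 hget
  rw [List.append_assoc, List.singleton_append, ← hget', ← List.drop_eq_getElem_cons,
    List.take_append_drop]

theorem uncoveredAreU_take_canonical (hP : InE P) (hk : k ∈ uncovered P) :
    UncoveredAreU ((canonical P).take k) := fun i hi => by
  have hkcov : ¬ EndsUD (canonical P) k := by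
    rw [endsUD_canonical_iff hP]
    exact fun h => (mem_uncovered.1 hk).2 (.inr h)
  obtain ⟨hik, hicov⟩ := mem_uncovered.1 hi
  simp only [List.length_take, length_canonical, lt_min_iff] at hik
  rw [covered_take hkcov hik.1, covered_canonical_iff hP] at hicov
  rw [List.getElem?_take, if_pos hik.1, getElem?_canonical hik.2,
    canonStep_of_not_covered hicov, if_neg fun h => by have := h k hk; omega]

theorem exists_drop_canonical_eq_UDpow (hP : InE P) (hk : k ∈ uncovered P)
    (hmax : ∀ i ∈ uncovered P, i ≤ k) : ∃ m, (canonical P).drop (k + 1) = UDpow m := by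
  refine eq_UDpow_of_uncovered_eq_empty _ (eq_empty_of_forall_notMem fun i hi => ?_)
  have hkcov : ¬ EndsUD (canonical P) (k + 1) := by
    rw [endsUD_canonical_iff hP]
    exact fun h => (mem_uncovered.1 hk).2 (.inl h)
  rw [mem_uncovered_drop hkcov, uncovered_canonical hP] at hi
  have := hmax _ hi
  omega

theorem InG_canonical (hP : InE P) : InG (canonical P) := by
  rcases (uncovered P).eq_empty_or_nonempty with he | hne
  · exact .inl (eq_UDpow_of_uncovered_eq_empty _ (by rw [uncovered_canonical hP, he]))
  obtain ⟨j, hj, hjmax⟩ : ∃ j ∈ uncovered P, ∀ k ∈ uncovered P, k ≤ j :=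
    (uncovered P).exists_max_image id hne
  have ht : 2 ≤ #(uncovered P) := by
    have := card_pos.2 hne
    have := card_uncovered_ne_one hP
    omega
  have hsplit := canonical_eq_take_append_drop hj hjmax
  obtain ⟨m, hm⟩ := exists_drop_canonical_eq_UDpow hP hj hjmax
  obtain ⟨l0, mids, kr1, hmids, hW⟩ :=
    isBlockWord_of_uncoveredAreU _ (uncoveredAreU_take_canonical hP hj)
  have hheight : (mids.map fun t => (t.1 : ℤ)).sum + kr1 = (#(uncovered P) - 1 : ℕ) := by
    have := hgt_canonical_of_max hP hj hjmax
    rw [hgt, hW] at this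
    simpa [sum_val_UDpow, sum_val_blocks, sum_val_Upow] using this
  rw [hsplit, hW, hm]
  cases mids with
  | nil =>
    have hkr1 : kr1 = #(uncovered P) - 1 := by simpa using hheight
    -- `kr1 = 1` would put a `D` right after the last `U` of the prefix, covering position `j`.
    have hs : kr1 ≠ 1 := by
      rintro rfl
      have hj' : j = 2 * l0 + 1 := by
        simpa [length_UDpow, length_Upow, (mem_uncovered.1 hj).1.le] using congrArg List.length hW
      have hUD : UDAt (canonical P) (2 * l0) := by
        rw [hsplit, hW, hm, ← hkr1]
        simp [UDAt, cfin, Upow, length_UDpow]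
      exact (mem_uncovered.1 (uncovered_canonical hP ▸ hj)).2 (.inr (hj' ▸ hUD))
    rw [← hkr1]
    exact .inr (.inl ⟨l0, kr1, m, by omega, by simp [cfin, hs]⟩)
  | cons t mids =>
    exact .inr (.inr ⟨l0, t :: mids, kr1, _, m, List.cons_ne_nil _ _, hmids, by omega, rfl⟩)

theorem getElem?_eq_U_of_eq_append (hW : UncoveredAreU W) {x : Step} {m : ℕ}
    (hQ : Q = W ++ [x] ++ UDpow m) (hi : i ∈ uncovered Q) (hk : k ∈ uncovered Q) (hik : i < k) :
    Q[i]? = some Step.U := by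
  subst hQ
  have hle : k ≤ W.length := by
    by_contra hlt
    obtain ⟨j, rfl⟩ : ∃ j, k = (W ++ [x]).length + j := ⟨k - (W.length + 1), by simp; omega⟩
    have hj : j < (UDpow m).length := by
      have := (mem_uncovered.1 hk).1
      simp only [List.length_append] at this ⊢
      omega
    rw [length_UDpow] at hj
    exact (mem_uncovered.1 hk).2 (covered_UDpow hj).append_left
  obtain ⟨-, hicov⟩ := mem_uncovered.1 hi
  have hiW : i < W.length := by omega
  rw [List.append_assoc, List.getElem?_append_left hiW]
  exact hW i (mem_uncovered.2 ⟨hiW, fun hc => hicov (List.append_assoc .. ▸ hc.append_right)⟩)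

theorem InG.getElem?_eq_U (hG : InG Q) (hi : i ∈ uncovered Q) (hk : k ∈ uncovered Q)
    (hik : i < k) : Q[i]? = some Step.U := by
  rcases hG with ⟨n, rfl⟩ | ⟨l, n, m, -, hQ⟩ | ⟨l0, mids, kr1, s, lr1, -, -, -, hQ⟩
  · simp [uncovered_UDpow] at hi
  · exact getElem?_eq_U_of_eq_append ((uncoveredAreU_UDpow l).append (uncoveredAreU_Upow n))
      hQ hi hk hik
  · exact getElem?_eq_U_of_eq_append (((uncoveredAreU_UDpow l0).append
      (uncoveredAreU_blocks mids)).append (uncoveredAreU_Upow kr1)) hQ hi hk hik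

theorem canonical_eq_self (hQ : InE Q)
    (hU : ∀ i ∈ uncovered Q, ∀ k ∈ uncovered Q, i < k → Q[i]? = some Step.U) :
    canonical Q = Q := by
  refine List.ext_getElem? fun i => ?_
  rcases lt_or_ge i Q.length with hi | hi
  swap
  · simp [hi]
  rw [getElem?_canonical hi]
  by_cases hcov : Covered Q i
  · rcases hcov with h | h
    · rw [canonStep_of_UDAt h, h.1]
    · rw [canonStep_of_endsUD h, h.getElem?]
  have hmem : i ∈ uncovered Q := mem_uncovered.2 ⟨hi, hcov⟩
  rw [canonStep_of_not_covered hcov]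
  split_ifs with hlast
  · have hsum := hgt_length_eq_sum_uncovered Q
    rw [hQ.2.1, ← add_sum_erase _ _ hmem, sum_congr rfl fun k hk => stepVal_of_getElem?
      (hU k (mem_of_mem_erase hk) i hmem (lt_of_le_of_ne (hlast k (mem_of_mem_erase hk))
        (ne_of_mem_erase hk)))] at hsum
    have h1 := card_uncovered_ne_one hQ
    have h0 := card_pos.2 ⟨i, hmem⟩
    simp only [Step.val, sum_const, card_erase_of_mem hmem, nsmul_eq_mul, mul_one] at hsum
    refine (getElem?_eq_cfin_of_stepVal hQ hi (by omega) ?_).symm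
    push_cast [Nat.cast_sub h0] at hsum ⊢
    linarith
  · obtain ⟨k, hk, hik⟩ := not_forall₂.1 hlast
    exact (hU i hmem k hk (by omega)).symm

end Representatives

/-- 𝒢 is a complete set of representatives of the UD-equivalence classes of ℰ. -/
theorem G_complete_set_of_representatives_for_UDEquiv (P : List Step) (hP : InE P) :
    ∃! Q : List Step, (InE Q ∧ InG Q) ∧ Q.length = P.length ∧ UDEquiv P Q := by
  refine ⟨canonical P, ⟨⟨InE_canonical hP, InG_canonical hP⟩, length_canonical,
    fun i => (UDAt_canonical_iff hP).symm⟩, ?_⟩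
  rintro Q ⟨⟨hQE, hQG⟩, hlen, hPQ⟩
  calc Q = canonical Q := (canonical_eq_self hQE fun i hi k hk => hQG.getElem?_eq_U hi hk).symm
    _ = canonical P := canonical_congr hlen fun i => (hPQ i).symm
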